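/- arXiv:1601.06056 — 2 statements merged into one kernel-verified Lean document; each statement's English description precedes it below -/
import Mathlib

section
/- Let π(u,v) = (α u^l v^m, φ(u^l v^m) + β u^n v^p) with lp − mn ≠ 0, l ≤ n, m ≤ p positive integers, α, β ∈ {±1}, and φ(t) = t·h(t^{1/e}) with h analytic. Then the Jacobian determinant of π equals u^{l+n−1} v^{m+p−1} times a unit in the ring of Puiseux-analytic germs at the corner point (0,0). -/
/-!
On the open quadrant `w = u^l v^m` is positive, where `φ t = t h(t^{1/e})` is differentiable.
By the chain rule the second row of the Jacobian is `φ'(w) dw + β d(u^n v^p)`; its first term is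
a multiple of the first row `α dw` and drops out of the determinant. What remains is `αβ` times
the Jacobian of the two monomials, `(lp - mn) u^{l+n-1} v^{m+p-1}`, so the unit is the constant
`αβ(lp - mn)`.
-/

lemma LinearMap.det_prod {R : Type*} [CommRing R] (f g : (R × R) →ₗ[R] R) :
    LinearMap.det (f.prod g) = f (1, 0) * g (0, 1) - f (0, 1) * g (1, 0) := by
  rw [← LinearMap.det_toMatrix (Module.Basis.finTwoProd R), Matrix.det_fin_two]
  simp [LinearMap.toMatrix_apply]

lemma LinearMap.det_smul_prod_smul_add_smul {R : Type*} [CommRing R] (f g : (R × R) →ₗ[R] R)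
    (a b c : R) :
    LinearMap.det ((a • f).prod (c • f + b • g)) = a * b * LinearMap.det (f.prod g) := by
  simp only [LinearMap.det_prod, LinearMap.add_apply, LinearMap.smul_apply, smul_eq_mul]
  ring

-- For `k = 0` the truncated `k - 1` is harmless because the factor `k` vanishes.
lemma natCast_mul_pow_pred_mul_pow {R : Type*} [CommSemiring R] (k j : ℕ) (x : R) :
    (k : R) * x ^ (k - 1) * x ^ j = k * x ^ (k + j - 1) := by
  cases k with
  | zero => simp
  | succ k => rw [mul_assoc, ← pow_add, Nat.add_sub_cancel, Nat.add_right_comm, Nat.add_sub_cancel]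

lemma DifferentiableAt.of_eq_mul_comp_rpow {φ h : ℝ → ℝ} {r w : ℝ}
    (hh : DifferentiableAt ℝ h (w ^ r)) (hφ : ∀ t, 0 ≤ t → φ t = t * h (t ^ r)) (hw : 0 < w) :
    DifferentiableAt ℝ φ w := by
  refine (differentiableAt_id.mul
    (hh.comp w (Real.differentiableAt_rpow_const_of_ne r hw.ne'))).congr_of_eventuallyEq ?_
  filter_upwards [Ioi_mem_nhds hw] with t ht using hφ t ht.le

noncomputable def fderivMonomial (a b : ℕ) (q : ℝ × ℝ) : (ℝ × ℝ) →L[ℝ] ℝ :=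
  (a * q.1 ^ (a - 1) * q.2 ^ b) • ContinuousLinearMap.fst ℝ ℝ ℝ
    + (b * q.1 ^ a * q.2 ^ (b - 1)) • ContinuousLinearMap.snd ℝ ℝ ℝ

lemma hasFDerivAt_fst_pow_mul_snd_pow (a b : ℕ) (q : ℝ × ℝ) :
    HasFDerivAt (fun q : ℝ × ℝ => q.1 ^ a * q.2 ^ b) (fderivMonomial a b q) q := by
  have hu := (hasDerivAt_pow a q.1).comp_hasFDerivAt q (hasFDerivAt_fst (𝕜 := ℝ) (p := q))
  have hv := (hasDerivAt_pow b q.2).comp_hasFDerivAt q (hasFDerivAt_snd (𝕜 := ℝ) (p := q))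
  refine (hu.mul hv).congr_fderiv ?_
  ext <;> simp [fderivMonomial] <;> ring

lemma det_prod_fderivMonomial (l m n p : ℕ) (q : ℝ × ℝ) :
    LinearMap.det ((fderivMonomial l m q : (ℝ × ℝ) →ₗ[ℝ] ℝ).prod (fderivMonomial n p q))
      = (l * p - m * n) * q.1 ^ (l + n - 1) * q.2 ^ (m + p - 1) := by
  have hu₁ := natCast_mul_pow_pred_mul_pow l n q.1
  have hu₂ := natCast_mul_pow_pred_mul_pow n l q.1
  have hv₁ := natCast_mul_pow_pred_mul_pow p m q.2
  have hv₂ := natCast_mul_pow_pred_mul_pow m p q.2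
  rw [Nat.add_comm n l] at hu₂
  rw [Nat.add_comm p m] at hv₁
  simp only [LinearMap.det_prod, fderivMonomial, ContinuousLinearMap.toLinearMap_add,
    ContinuousLinearMap.toLinearMap_smul, ContinuousLinearMap.coe_fst, ContinuousLinearMap.coe_snd,
    LinearMap.add_apply, LinearMap.smul_apply, LinearMap.fst_apply, LinearMap.snd_apply,
    smul_eq_mul, mul_one, mul_zero, add_zero, zero_add]
  linear_combination (p * q.2 ^ (p - 1) * q.2 ^ m) * hu₁ + (l * q.1 ^ (l + n - 1)) * hv₁
    - (m * q.2 ^ (m - 1) * q.2 ^ p) * hu₂ - (n * q.1 ^ (l + n - 1)) * hv₂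

lemma det_fderiv_corner_normal_form (l m n p : ℕ) (α β : ℝ) {φ : ℝ → ℝ} {q : ℝ × ℝ}
    (hφ : DifferentiableAt ℝ φ (q.1 ^ l * q.2 ^ m)) :
    LinearMap.det (fderiv ℝ (fun q : ℝ × ℝ =>
        (α * (q.1 ^ l * q.2 ^ m), φ (q.1 ^ l * q.2 ^ m) + β * (q.1 ^ n * q.2 ^ p))) q
        : (ℝ × ℝ) →ₗ[ℝ] ℝ × ℝ)
      = α * β * (l * p - m * n) * q.1 ^ (l + n - 1) * q.2 ^ (m + p - 1) := by
  have hw := hasFDerivAt_fst_pow_mul_snd_pow l m q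
  have hz := hasFDerivAt_fst_pow_mul_snd_pow n p q
  have hD : HasFDerivAt (fun q : ℝ × ℝ =>
        (α * (q.1 ^ l * q.2 ^ m), φ (q.1 ^ l * q.2 ^ m) + β * (q.1 ^ n * q.2 ^ p)))
      ((α • fderivMonomial l m q).prod
        (deriv φ (q.1 ^ l * q.2 ^ m) • fderivMonomial l m q + β • fderivMonomial n p q)) q :=
    (hw.const_mul α).prodMk ((hφ.hasDerivAt.comp_hasFDerivAt q hw).add (hz.const_mul β))
  rw [hD.fderiv]
  simp only [ContinuousLinearMap.coe_prod, ContinuousLinearMap.toLinearMap_add,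
    ContinuousLinearMap.toLinearMap_smul, LinearMap.det_smul_prod_smul_add_smul,
    det_prod_fderivMonomial]
  ring

theorem jacobian_ideal_corner_point_general
    (l m n p : ℕ)
    (hindep : (l : ℤ) * p - (m : ℤ) * n ≠ 0)
    (α β : ℝ) (hα : α = 1 ∨ α = -1) (hβ : β = 1 ∨ β = -1)
    (φ h : ℝ → ℝ) (e : ℕ) (hh : ∀ t : ℝ, AnalyticAt ℝ h t)
    (hφ : ∀ t : ℝ, 0 ≤ t → φ t = t * h (t ^ ((e : ℝ)⁻¹)))
    (P : ℝ × ℝ → ℝ × ℝ)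
    (hP : ∀ q : ℝ × ℝ, P q = (α * q.1 ^ l * q.2 ^ m, φ (q.1 ^ l * q.2 ^ m) + β * q.1 ^ n * q.2 ^ p)) :
    ∃ U : ℝ × ℝ → ℝ,
      ContinuousWithinAt U {q : ℝ × ℝ | 0 ≤ q.1 ∧ 0 ≤ q.2} (0, 0) ∧ U (0, 0) ≠ 0 ∧
      ∀ᶠ q in nhdsWithin ((0 : ℝ), (0 : ℝ)) {q : ℝ × ℝ | 0 < q.1 ∧ 0 < q.2},
        LinearMap.det ((fderiv ℝ P q) : (ℝ × ℝ) →ₗ[ℝ] (ℝ × ℝ))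
          = q.1 ^ (l + n - 1) * q.2 ^ (m + p - 1) * U q := by
  have hαβ : α * β ≠ 0 := by
    rcases hα with rfl | rfl <;> rcases hβ with rfl | rfl <;> norm_num
  have hlmnp : (l * p - m * n : ℝ) ≠ 0 := by exact_mod_cast hindep
  have hP' : P = fun q : ℝ × ℝ =>
      (α * (q.1 ^ l * q.2 ^ m), φ (q.1 ^ l * q.2 ^ m) + β * (q.1 ^ n * q.2 ^ p)) := by
    funext q
    simp only [hP, mul_assoc]
  refine ⟨fun _ => α * β * (l * p - m * n), continuousWithinAt_const,
    mul_ne_zero hαβ hlmnp, ?_⟩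
  filter_upwards [self_mem_nhdsWithin] with q ⟨hu, hv⟩
  have hφ' : DifferentiableAt ℝ φ (q.1 ^ l * q.2 ^ m) :=
    ((hh _).differentiableAt).of_eq_mul_comp_rpow hφ (by positivity)
  rw [hP', det_fderiv_corner_normal_form l m n p α β hφ']
  ring

/-- for the corner normal form `π(u,v) = (α u^l v^m, φ(u^l v^m) + β u^n v^p)`
with `lp − mn ≠ 0`, the Jacobian determinant equals `u^{l+n−1} v^{m+p−1}` times a unit
(a Puiseux-analytic germ not vanishing at the corner point `(0,0)`). -/
theorem jacobian_ideal_corner_point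
    (l m n p : ℕ) (hl : 0 < l) (hm : 0 < m) (hln : l ≤ n) (hmp : m ≤ p)
    (hindep : (l : ℤ) * p - (m : ℤ) * n ≠ 0)
    (α β : ℝ) (hα : α = 1 ∨ α = -1) (hβ : β = 1 ∨ β = -1)
    (φ h : ℝ → ℝ) (e : ℕ) (he : 0 < e) (hh : ∀ t : ℝ, AnalyticAt ℝ h t)
    (hφ : ∀ t : ℝ, 0 ≤ t → φ t = t * h (t ^ ((e : ℝ)⁻¹)))
    (P : ℝ × ℝ → ℝ × ℝ)
    (hP : ∀ q : ℝ × ℝ, P q = (α * q.1 ^ l * q.2 ^ m, φ (q.1 ^ l * q.2 ^ m) + β * q.1 ^ n * q.2 ^ p)) :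
    ∃ U : ℝ × ℝ → ℝ,
      ContinuousWithinAt U {q : ℝ × ℝ | 0 ≤ q.1 ∧ 0 ≤ q.2} (0, 0) ∧ U (0, 0) ≠ 0 ∧
      ∀ᶠ q in nhdsWithin ((0 : ℝ), (0 : ℝ)) {q : ℝ × ℝ | 0 < q.1 ∧ 0 < q.2},
        LinearMap.det ((fderiv ℝ P q) : (ℝ × ℝ) →ₗ[ℝ] (ℝ × ℝ))
          = q.1 ^ (l + n - 1) * q.2 ^ (m + p - 1) * U q :=
  jacobian_ideal_corner_point_general l m n p hindep α β hα hβ φ h e hh hφ P hP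
end

section
/- Let F : ℝⁿ × ℝ → ℝ be defined on the set U = {(x,y) : |y| ≤ |g(x)|} by F(x,y) = (f(x)/g(x))·y where g(x) ≠ 0, extended by 0 where g(x) = 0. If f and g are Lipschitz, vanish on the same set, and the ratio f/g is bounded (in absolute value, between positive constants m and M on {g ≠ 0}), then F is Lipschitz on U. -/
open Filter Set

/-!
Write `r = f / g`. On `U` every point has the form `(x, g x * t)` with `|t| ≤ 1`, and since `f`
vanishes with `g` we have `f = r * g`. Hence
`r x * y - r x' * y' = ((f x - f x') + r x' * (g x' - g x)) * t + r x' * (y - y')`,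
and each term is bounded by a multiple of the distance, using the Lipschitz bounds on `f`, `g`
and the bound `|r| ≤ M`.
-/

open scoped NNReal

theorem eq_mul_div_of_abs_le_abs {a y : ℝ} (h : |y| ≤ |a|) : y = a * (y / a) := by
  rcases eq_or_ne a 0 with rfl | ha
  · simpa using h
  · rw [mul_div_cancel₀ _ ha]

theorem abs_div_le_one_of_abs_le_abs {a y : ℝ} (h : |y| ≤ |a|) : |y / a| ≤ 1 := by
  rw [abs_div]
  exact div_le_one_of_le₀ h (abs_nonneg a)

theorem div_mul_sub_div_mul_eq {a a' b b' y y' t : ℝ} (hy : y = b * t)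
    (ha : b = 0 → a = 0) (ha' : b' = 0 → a' = 0) :
    a / b * y - a' / b' * y' = ((a - a') + a' / b' * (b' - b)) * t + a' / b' * (y - y') := by
  have hab : a / b * b = a := div_mul_cancel_of_imp ha
  have hab' : a' / b' * b' = a' := div_mul_cancel_of_imp ha'
  calc a / b * y - a' / b' * y' = a / b * b * t - a' / b' * b' * t + a' / b' * (b' - b) * t
        + a' / b' * (y - y') := by rw [hy]; ring
    _ = _ := by rw [hab, hab']; ring

theorem lipschitzOnWith_div_mul {X : Type*} [PseudoMetricSpace X] {f g : X → ℝ}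
    {Kf Kg M : ℝ≥0} (hf : LipschitzWith Kf f) (hg : LipschitzWith Kg g)
    (hfg : ∀ x, g x = 0 → f x = 0) (hM : ∀ x, |f x / g x| ≤ M) :
    LipschitzOnWith (Kf + M * (Kg + 1)) (fun p : X × ℝ => f p.1 / g p.1 * p.2)
      {p | |p.2| ≤ |g p.1|} := by
  refine LipschitzOnWith.of_dist_le_mul ?_
  rintro ⟨x, y⟩ (hp : |y| ≤ |g x|) ⟨x', y'⟩ -
  set d := dist (x, y) (x', y') with hd
  have hdx : dist x x' ≤ d := by rw [hd, Prod.dist_eq]; exact le_max_left _ _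
  have hdy : |y - y'| ≤ d := by rw [hd, Prod.dist_eq, ← Real.dist_eq]; exact le_max_right _ _
  have hfx : |f x - f x'| ≤ Kf * d := by
    rw [← Real.dist_eq]; exact (hf.dist_le_mul x x').trans (by gcongr)
  have hgx : |g x' - g x| ≤ Kg * d := by
    rw [← Real.dist_eq, dist_comm]; exact (hg.dist_le_mul x x').trans (by gcongr)
  have ht : |y / g x| ≤ 1 := abs_div_le_one_of_abs_le_abs hp
  have hr : |f x' / g x'| ≤ M := hM x'
  rw [Real.dist_eq, div_mul_sub_div_mul_eq (eq_mul_div_of_abs_le_abs hp) (hfg x) (hfg x')]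
  calc _ ≤ (|f x - f x'| + |f x' / g x'| * |g x' - g x|) * |y / g x|
          + |f x' / g x'| * |y - y'| := by
        refine (abs_add_le _ _).trans ?_
        rw [abs_mul, abs_mul]
        gcongr
        exact (abs_add_le _ _).trans_eq (by rw [abs_mul])
    _ ≤ (Kf * d + M * (Kg * d)) * 1 + M * d := by gcongr
    _ = _ := by push_cast; ring

theorem contact_family_lipschitz_general
    {n : ℕ}
    (f g : (Fin n → ℝ) → ℝ)
    (Kf Kg : NNReal) (hf : LipschitzWith Kf f) (hg : LipschitzWith Kg g)
    (hzero : ∀ x, f x = 0 ↔ g x = 0)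
    (m M : ℝ)
    (hbound : ∀ x, g x ≠ 0 → m ≤ |f x / g x| ∧ |f x / g x| ≤ M)
    (F : (Fin n → ℝ) × ℝ → ℝ)
    (hF : ∀ p : (Fin n → ℝ) × ℝ, F p = if g p.1 = 0 then 0 else (f p.1 / g p.1) * p.2) :
    ∃ K : NNReal, LipschitzOnWith K F {p : (Fin n → ℝ) × ℝ | |p.2| ≤ |g p.1|} := by
  -- Since `f x / 0 = 0` in Lean, the case distinction in `hF` is redundant.
  have hF' : F = fun p => f p.1 / g p.1 * p.2 := by
    funext p
    rw [hF]
    split_ifs with h <;> simp [h]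
  have hM : ∀ x, |f x / g x| ≤ M.toNNReal := fun x => by
    by_cases hx : g x = 0
    · simp [hx]
    · exact (hbound x hx).2.trans (Real.le_coe_toNNReal M)
  exact ⟨_, hF' ▸ lipschitzOnWith_div_mul hf hg (fun x => (hzero x).2) hM⟩

/-- if `f`, `g` are Lipschitz, vanish on the same set, and `m ≤ |f/g| ≤ M` on
`{g ≠ 0}` for positive constants `m, M`, then `F(x,y) = (f(x)/g(x))·y` (extended by `0` where
`g = 0`) is Lipschitz on `U = {(x,y) : |y| ≤ |g(x)|}`. -/
theorem contact_family_lipschitz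
    {n : ℕ}
    (f g : (Fin n → ℝ) → ℝ)
    (Kf Kg : NNReal) (hf : LipschitzWith Kf f) (hg : LipschitzWith Kg g)
    (hzero : ∀ x, f x = 0 ↔ g x = 0)
    (m M : ℝ) (hm : 0 < m) (hmM : m ≤ M)
    (hbound : ∀ x, g x ≠ 0 → m ≤ |f x / g x| ∧ |f x / g x| ≤ M)
    (F : (Fin n → ℝ) × ℝ → ℝ)
    (hF : ∀ p : (Fin n → ℝ) × ℝ, F p = if g p.1 = 0 then 0 else (f p.1 / g p.1) * p.2) :
    ∃ K : NNReal, LipschitzOnWith K F {p : (Fin n → ℝ) × ℝ | |p.2| ≤ |g p.1|} :=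
  contact_family_lipschitz_general f g Kf Kg hf hg hzero m M hbound F hF
end
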